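/- arXiv:2511.14822 — 3 statements merged into one kernel-verified Lean document; each statement's English description precedes it below -/
import Mathlib

section
/- (Well-definedness of the Hohenberg–Kohn functional.) Let v, v' ∈ V, let Γ be a pure ground state of ι(v)+W and Γ' a pure ground state of ι(v')+W, and suppose ι*(Γ) = ι*(Γ'). Then Tr(Γ W) = Tr(Γ' W). -/
open Filter Topology

noncomputable section

variable {V H : Type*}
  [AddCommGroup V] [Module ℝ V]
  [NormedAddCommGroup H] [InnerProductSpace ℂ H]

/-- The real expectation value `⟨ψ, T ψ⟩` of an operator `T` in the vector `ψ`. -/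
def expectation (T : H →ₗ[ℂ] H) (ψ : H) : ℝ := (inner ℂ ψ (T ψ) : ℂ).re

/-- The ground state energy of the Hamiltonian `ι v + W`. -/
def energy (ι : V →ₗ[ℝ] (H →ₗ[ℂ] H)) (W : H →ₗ[ℂ] H) (v : V) : ℝ :=
  sInf {r : ℝ | ∃ ψ : H, ‖ψ‖ = 1 ∧ r = expectation (ι v + W) ψ}

/-- The density `ι*(|ψ⟩⟨ψ|)` of the pure state given by the unit vector `ψ`,
as an element of the dual space `V*`. -/
def pureDensity (ι : V →ₗ[ℝ] (H →ₗ[ℂ] H)) (ψ : H) : Module.Dual ℝ V where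
  toFun v := expectation (ι v) ψ
  map_add' v w := by simp [expectation, inner_add_right]
  map_smul' c v := by
    simp only [map_smul, LinearMap.smul_apply, expectation, RingHom.id_apply, smul_eq_mul]
    rw [← algebraMap_smul ℂ c ((ι v) ψ), Complex.coe_algebraMap, inner_smul_right]
    simp

/-- An ensemble state: a positive semidefinite operator of unit trace. -/
def IsEnsembleState (Γ : H →ₗ[ℂ] H) : Prop :=
  Γ.IsSymmetric ∧ (∀ x : H, 0 ≤ (inner ℂ x (Γ x) : ℂ).re) ∧ LinearMap.trace ℂ H Γ = 1

/-- The density `ι*(Γ)` of a state `Γ`, `v ↦ Tr(Γ ι(v))`, as an element of `V*`. -/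
def traceDensity (ι : V →ₗ[ℝ] (H →ₗ[ℂ] H)) (Γ : H →ₗ[ℂ] H) : Module.Dual ℝ V where
  toFun v := (LinearMap.trace ℂ H (ι v ∘ₗ Γ)).re
  map_add' v w := by simp [map_add, LinearMap.add_comp]
  map_smul' c v := by
    simp only [map_smul, RingHom.id_apply, smul_eq_mul]
    rw [← algebraMap_smul ℂ c (ι v), LinearMap.smul_comp, map_smul, Complex.coe_algebraMap]
    simp

/-- The pure (Levy–Lieb) universal functional `F_p`. -/
def Fp (ι : V →ₗ[ℝ] (H →ₗ[ℂ] H)) (W : H →ₗ[ℂ] H) (ρ : Module.Dual ℝ V) : ℝ :=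
  sInf {r : ℝ | ∃ ψ : H, ‖ψ‖ = 1 ∧ pureDensity ι ψ = ρ ∧ r = expectation W ψ}

/-- The ensemble (Lieb/Valone) universal functional `F_e`. -/
def Fe (ι : V →ₗ[ℝ] (H →ₗ[ℂ] H)) (W : H →ₗ[ℂ] H) (ρ : Module.Dual ℝ V) : ℝ :=
  sInf {r : ℝ | ∃ Γ : H →ₗ[ℂ] H, IsEnsembleState Γ ∧ traceDensity ι Γ = ρ ∧
    r = (LinearMap.trace ℂ H (W ∘ₗ Γ)).re}

/-- The weight space of a functional `α ∈ V*`. -/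
def weightSpace (ι : V →ₗ[ℝ] (H →ₗ[ℂ] H)) (α : Module.Dual ℝ V) : Submodule ℂ H where
  carrier := {ψ : H | ∀ v : V, ι v ψ = (α v : ℂ) • ψ}
  add_mem' := by
    intro a b ha hb v
    rw [map_add, ha v, hb v, smul_add]
  zero_mem' := by intro v; simp
  smul_mem' := by
    intro c x hx v
    rw [LinearMap.map_smul, hx v, smul_comm]

/-- The set of weights of an abelian functional theory. -/
def weights (ι : V →ₗ[ℝ] (H →ₗ[ℂ] H)) : Set (Module.Dual ℝ V) :=
  {α : Module.Dual ℝ V | weightSpace ι α ≠ ⊥}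

/-- The derivative of the density map along the set of pure states at `|Ψ⟩⟨Ψ|`,
applied to the tangent vector `φ ⊥ Ψ`: the functional `v ↦ 2 Re⟨φ, ι(v)Ψ⟩`. -/
def derivDensity (ι : V →ₗ[ℝ] (H →ₗ[ℂ] H)) (Ψ φ : H) : Module.Dual ℝ V where
  toFun v := 2 * (inner ℂ φ (ι v Ψ) : ℂ).re
  map_add' v w := by simp [inner_add_right]; ring
  map_smul' c v := by
    simp only [map_smul, LinearMap.smul_apply, RingHom.id_apply, smul_eq_mul]
    rw [← algebraMap_smul ℂ c ((ι v) Ψ), Complex.coe_algebraMap, inner_smul_right]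
    simp; ring

/-- `ρ` is a relative interior point of the convex set `C` (i.e. an interior point
of `C` within its affine span): every point of `C` lies on a segment inside `C`
having `ρ` in its (open) interior. -/
def IsRelInterior {M : Type*} [AddCommGroup M] [Module ℝ M] (C : Set M) (ρ : M) : Prop :=
  ρ ∈ C ∧ ∀ σ ∈ C, ∃ τ ∈ C, ∃ t : ℝ, 0 < t ∧ t < 1 ∧ ρ = t • σ + (1 - t) • τ

/-- Strong orthogonality: componentwise orthogonality in every weight space. -/
def StronglyOrthogonal [FiniteDimensional ℂ H] (ι : V →ₗ[ℝ] (H →ₗ[ℂ] H)) (Φ Φ' : H) : Prop :=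
  ∀ α : Module.Dual ℝ V, weightSpace ι α ≠ ⊥ →
    (inner ℂ (Submodule.orthogonalProjectionOnto (weightSpace ι α) Φ)
        (Submodule.orthogonalProjectionOnto (weightSpace ι α) Φ') : ℂ) = 0

/-- The `k`-convex hull of a set. -/
def convk {M : Type*} [AddCommGroup M] [Module ℝ M] (k : ℕ) (X : Set M) : Set M :=
  {ρ : M | ∃ (t : Fin k → ℝ) (x : Fin k → M),
    (∀ i, 0 ≤ t i) ∧ (∑ i, t i) = 1 ∧ (∀ i, x i ∈ X) ∧ (∑ i, t i • x i) = ρ}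

/-- The operator `A ⊗ id` on `H ⊗ ℂᵏ ≅ H ⊕ ⋯ ⊕ H` (k summands). -/
def opBar (k : ℕ) (A : H →ₗ[ℂ] H) :
    (PiLp 2 fun _ : Fin k => H) →ₗ[ℂ] (PiLp 2 fun _ : Fin k => H) where
  toFun x := WithLp.toLp 2 (fun i => A (x i))
  map_add' x y := by ext i; simp [PiLp.add_apply]
  map_smul' c x := by ext i; simp [PiLp.smul_apply]

/-- The potential map `v ↦ ι(v) ⊗ id` of the `k`-convexified functional theory. -/
def potBar (k : ℕ) (ι : V →ₗ[ℝ] (H →ₗ[ℂ] H)) :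
    V →ₗ[ℝ] ((PiLp 2 fun _ : Fin k => H) →ₗ[ℂ] (PiLp 2 fun _ : Fin k => H)) where
  toFun v := opBar k (ι v)
  map_add' v w := by
    apply LinearMap.ext; intro x; ext i
    simp [opBar, map_add]
  map_smul' c v := by
    apply LinearMap.ext; intro x; ext i
    simp [opBar, map_smul]

/-- The subspace of potentials mapped to real multiples of the identity operator. -/
def scalarPart (ι : V →ₗ[ℝ] (H →ₗ[ℂ] H)) : Submodule ℝ V where
  carrier := {v : V | ∃ c : ℝ, ι v = c • (LinearMap.id : H →ₗ[ℂ] H)}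
  add_mem' := by
    rintro a b ⟨c, hc⟩ ⟨d, hd⟩
    exact ⟨c + d, by rw [map_add, hc, hd, add_smul]⟩
  zero_mem' := ⟨0, by simp⟩
  smul_mem' := by
    rintro a v ⟨c, hc⟩
    exact ⟨a * c, by rw [map_smul, hc, smul_smul]⟩

/-! The Hohenberg–Kohn variational argument: `ψ` minimizes `⟨ι v + W⟩`, so testing it against
`ψ'` gives `⟨ι v⟩_ψ + ⟨W⟩_ψ ≤ ⟨ι v⟩_ψ' + ⟨W⟩_ψ'`, and the potential terms cancel because the two
densities agree. Hence `⟨W⟩_ψ ≤ ⟨W⟩_ψ'`, and exchanging the roles of `(v, ψ)` and `(v', ψ')`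
gives the reverse inequality. -/

lemma expectation_add (A B : H →ₗ[ℂ] H) (χ : H) :
    expectation (A + B) χ = expectation A χ + expectation B χ := by
  simp [expectation]

lemma abs_expectation_le (T : H →L[ℂ] H) (χ : H) :
    |expectation (T : H →ₗ[ℂ] H) χ| ≤ ‖T‖ * ‖χ‖ ^ 2 :=
  calc |expectation (T : H →ₗ[ℂ] H) χ| ≤ ‖(inner ℂ χ (T χ) : ℂ)‖ := Complex.abs_re_le_norm _
    _ ≤ ‖χ‖ * ‖T χ‖ := norm_inner_le_norm _ _
    _ ≤ ‖χ‖ * (‖T‖ * ‖χ‖) := by gcongr; exact T.le_opNorm χ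
    _ = ‖T‖ * ‖χ‖ ^ 2 := by ring

lemma bddBelow_expectation_sphere [FiniteDimensional ℂ H] (A : H →ₗ[ℂ] H) :
    BddBelow {r : ℝ | ∃ χ : H, ‖χ‖ = 1 ∧ r = expectation A χ} := by
  refine ⟨-‖LinearMap.toContinuousLinearMap A‖, ?_⟩
  rintro r ⟨χ, hχ, rfl⟩
  have h := abs_expectation_le (LinearMap.toContinuousLinearMap A) χ
  rw [LinearMap.coe_toContinuousLinearMap, hχ, one_pow, mul_one] at h
  exact (abs_le.mp h).1

lemma energy_le_expectation [FiniteDimensional ℂ H] (ι : V →ₗ[ℝ] (H →ₗ[ℂ] H))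
    (W : H →ₗ[ℂ] H) (v : V) {χ : H} (hχ : ‖χ‖ = 1) :
    energy ι W v ≤ expectation (ι v + W) χ :=
  csInf_le (bddBelow_expectation_sphere _) ⟨χ, hχ, rfl⟩

theorem hk_functional_well_defined_general [FiniteDimensional ℂ H]
    (ι : V →ₗ[ℝ] (H →ₗ[ℂ] H)) (W : H →ₗ[ℂ] H)
    (v v' : V) (ψ ψ' : H)
    (hψ : ‖ψ‖ = 1) (hg : expectation (ι v + W) ψ = energy ι W v)
    (hψ' : ‖ψ'‖ = 1) (hg' : expectation (ι v' + W) ψ' = energy ι W v')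
    (hρ : pureDensity ι ψ = pureDensity ι ψ') :
    expectation W ψ = expectation W ψ' := by
  have hdens : ∀ u : V, expectation (ι u) ψ = expectation (ι u) ψ' :=
    fun u => LinearMap.congr_fun hρ u
  have h₁ : expectation (ι v + W) ψ ≤ expectation (ι v + W) ψ' :=
    hg ▸ energy_le_expectation ι W v hψ'
  have h₂ : expectation (ι v' + W) ψ' ≤ expectation (ι v' + W) ψ :=
    hg' ▸ energy_le_expectation ι W v' hψ
  rw [expectation_add, expectation_add, hdens] at h₁ h₂
  linarith

/-- well-definedness of the Hohenberg–Kohn functional. -/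
theorem hk_functional_well_defined [FiniteDimensional ℝ V] [FiniteDimensional ℂ H] [Nontrivial H]
    (ι : V →ₗ[ℝ] (H →ₗ[ℂ] H)) (W : H →ₗ[ℂ] H)
    (hι : ∀ v : V, (ι v).IsSymmetric) (hW : W.IsSymmetric)
    (v v' : V) (ψ ψ' : H)
    (hψ : ‖ψ‖ = 1) (hg : expectation (ι v + W) ψ = energy ι W v)
    (hψ' : ‖ψ'‖ = 1) (hg' : expectation (ι v' + W) ψ' = energy ι W v')
    (hρ : pureDensity ι ψ = pureDensity ι ψ') :
    expectation W ψ = expectation W ψ' :=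
  hk_functional_well_defined_general ι W v v' ψ ψ' hψ hg hψ' hg' hρ

end
end

section
/- (Legendre-transform relation between energy and universal functionals.) For every v ∈ V, E(v) = min over ρ ∈ ι*(P) of (⟨ρ, v⟩ + F_p(ρ)) and E(v) = min over ρ ∈ ι*(E) of (⟨ρ, v⟩ + F_e(ρ)), where in each case the minimum is attained. -/
/-!
Grouping states by their density turns the minimization of `⟨ρ, v⟩ + F(ρ)` over densities into
the minimization of the energy `Tr(Γ (ι(v) + W))` over states `Γ`. Over pure states this minimum is
`E(v)` by definition, attained at a ground state because the unit sphere is compact. Over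
ensemble states it is still `E(v)`: in an eigenbasis of `Γ` the energy is a convex combination of
expectation values in unit vectors, and the projector onto a ground state attains it.
-/

open Filter Topology

noncomputable section

variable {V H : Type*}
  [AddCommGroup V] [Module ℝ V]
  [NormedAddCommGroup H] [InnerProductSpace ℂ H]

open InnerProductSpace

theorem isLeast_add_csInf_fiber {σ D : Type*} {P : σ → Prop} (d : σ → D) (f : D → ℝ)
    (w : σ → ℝ) {s₀ : σ} (hs₀ : P s₀) (hmin : ∀ s, P s → f (d s₀) + w s₀ ≤ f (d s) + w s) :
    IsLeast {r : ℝ | ∃ ρ, (∃ s, P s ∧ d s = ρ) ∧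
        r = f ρ + sInf {r | ∃ s, P s ∧ d s = ρ ∧ r = w s}} (f (d s₀) + w s₀) := by
  have hfiber_min : IsLeast {r | ∃ s, P s ∧ d s = d s₀ ∧ r = w s} (w s₀) := by
    refine ⟨⟨s₀, hs₀, rfl, rfl⟩, ?_⟩
    rintro _ ⟨s, hs, hds, rfl⟩
    linarith [hds ▸ hmin s hs]
  refine ⟨⟨d s₀, ⟨s₀, hs₀, rfl⟩, by rw [hfiber_min.csInf_eq]⟩, ?_⟩
  rintro _ ⟨_, ⟨s₁, hs₁, rfl⟩, rfl⟩
  have hfiber_bound : f (d s₀) + w s₀ - f (d s₁) ≤ sInf {r | ∃ s, P s ∧ d s = d s₁ ∧ r = w s} := by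
    refine le_csInf ⟨w s₁, s₁, hs₁, rfl, rfl⟩ ?_
    rintro _ ⟨s, hs, hds, rfl⟩
    linarith [hds ▸ hmin s hs]
  linarith [hfiber_bound]

theorem expectation_add_s3 (S T : H →ₗ[ℂ] H) (ψ : H) :
    expectation (S + T) ψ = expectation S ψ + expectation T ψ := by
  simp only [expectation, LinearMap.add_apply, inner_add_right, Complex.add_re]

theorem IsEnsembleState.isPositive {Γ : H →ₗ[ℂ] H} (hΓ : IsEnsembleState Γ) : Γ.IsPositive :=
  ⟨hΓ.1, fun x => hΓ.1 x x ▸ hΓ.2.1 x⟩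

theorem re_trace_comp_rankOne_self [FiniteDimensional ℂ H] (T : H →ₗ[ℂ] H) (ψ : H) :
    (LinearMap.trace ℂ H (T ∘ₗ (rankOne ℂ ψ ψ).toLinearMap)).re = expectation T ψ := by
  have hcomp : T ∘ₗ (rankOne ℂ ψ ψ).toLinearMap = (rankOne ℂ (T ψ) ψ).toLinearMap := by
    ext x; simp
  rw [hcomp, trace_rankOne]; rfl

theorem isEnsembleState_rankOne_self [FiniteDimensional ℂ H] {ψ : H} (hψ : ‖ψ‖ = 1) :
    IsEnsembleState (rankOne ℂ ψ ψ).toLinearMap := by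
  have hpos := (isPositive_rankOne_self (𝕜 := ℂ) ψ).toLinearMap
  refine ⟨hpos.isSymmetric, hpos.re_inner_nonneg_right, ?_⟩
  rw [trace_rankOne, inner_self_eq_norm_sq_to_K, hψ]; norm_num

theorem le_re_trace_comp_of_isEnsembleState [FiniteDimensional ℂ H] {T Γ : H →ₗ[ℂ] H}
    (hΓ : IsEnsembleState Γ) {c : ℝ} (hc : ∀ ψ : H, ‖ψ‖ = 1 → c ≤ expectation T ψ) :
    c ≤ (LinearMap.trace ℂ H (T ∘ₗ Γ)).re := by
  have hΓpos := hΓ.isPositive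
  let b := hΓpos.isSymmetric.eigenvectorBasis rfl
  let μ := hΓpos.isSymmetric.eigenvalues rfl
  have hsum : ∑ i, μ i = 1 := by
    have := hΓpos.isSymmetric.re_trace_eq_sum_eigenvalues rfl
    rw [hΓ.2.2] at this
    simpa using this.symm
  have htrace : (LinearMap.trace ℂ H (T ∘ₗ Γ)).re = ∑ i, μ i * expectation T (b i) := by
    rw [LinearMap.trace_eq_sum_inner _ b, Complex.re_sum]
    refine Finset.sum_congr rfl fun i _ => ?_
    rw [LinearMap.comp_apply, hΓpos.isSymmetric.apply_eigenvectorBasis, map_smul,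
      inner_smul_right]
    exact RCLike.re_ofReal_mul (K := ℂ) _ _
  calc c = ∑ i, μ i * c := by rw [← Finset.sum_mul, hsum, one_mul]
    _ ≤ ∑ i, μ i * expectation T (b i) := by
        gcongr with i
        · exact hΓpos.nonneg_eigenvalues rfl i
        · exact hc _ (b.orthonormal.1 i)
    _ = _ := htrace.symm

theorem exists_expectation_minimizer [FiniteDimensional ℂ H] [Nontrivial H] (T : H →ₗ[ℂ] H) :
    ∃ ψ : H, ‖ψ‖ = 1 ∧ ∀ φ : H, ‖φ‖ = 1 → expectation T ψ ≤ expectation T φ := by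
  have hcont : Continuous (expectation T) :=
    Complex.continuous_re.comp (continuous_id.inner (LinearMap.continuous_of_finiteDimensional T))
  obtain ⟨ψ, hψ, hmin⟩ := (isCompact_sphere (0 : H) 1).exists_isMinOn
    ((NormedSpace.sphere_nonempty).2 zero_le_one) hcont.continuousOn
  exact ⟨ψ, mem_sphere_zero_iff_norm.1 hψ, fun φ hφ => hmin (mem_sphere_zero_iff_norm.2 hφ)⟩

theorem energy_legendre_transform_general [FiniteDimensional ℂ H] [Nontrivial H]
    (ι : V →ₗ[ℝ] (H →ₗ[ℂ] H)) (W : H →ₗ[ℂ] H)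
    (v : V) :
    IsLeast {r : ℝ | ∃ ρ : Module.Dual ℝ V,
        (∃ ψ : H, ‖ψ‖ = 1 ∧ pureDensity ι ψ = ρ) ∧ r = ρ v + Fp ι W ρ} (energy ι W v) ∧
    IsLeast {r : ℝ | ∃ ρ : Module.Dual ℝ V,
        (∃ Γ : H →ₗ[ℂ] H, IsEnsembleState Γ ∧ traceDensity ι Γ = ρ) ∧
        r = ρ v + Fe ι W ρ} (energy ι W v) := by
  obtain ⟨ψ₀, hψ₀, hmin⟩ := exists_expectation_minimizer (ι v + W)
  have hE : energy ι W v = expectation (ι v + W) ψ₀ :=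
    IsLeast.csInf_eq ⟨⟨ψ₀, hψ₀, rfl⟩, by rintro _ ⟨φ, hφ, rfl⟩; exact hmin φ hφ⟩
  have hpure (ψ : H) : expectation (ι v + W) ψ = pureDensity ι ψ v + expectation W ψ :=
    expectation_add_s3 _ _ ψ
  have hens (Γ : H →ₗ[ℂ] H) : (LinearMap.trace ℂ H ((ι v + W) ∘ₗ Γ)).re =
      traceDensity ι Γ v + (LinearMap.trace ℂ H (W ∘ₗ Γ)).re := by
    simp [traceDensity, LinearMap.add_comp]
  constructor
  · rw [hE, hpure]
    exact isLeast_add_csInf_fiber (pureDensity ι) (· v) (expectation W) hψ₀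
      fun ψ hψ => by simpa only [hpure] using hmin ψ hψ
  · rw [hE, ← re_trace_comp_rankOne_self, hens]
    exact isLeast_add_csInf_fiber (traceDensity ι) (· v)
      (fun Γ => (LinearMap.trace ℂ H (W ∘ₗ Γ)).re) (isEnsembleState_rankOne_self hψ₀)
      fun Γ hΓ => by
        rw [← hens, ← hens, re_trace_comp_rankOne_self]
        exact le_re_trace_comp_of_isEnsembleState hΓ hmin

/-- Legendre-transform relation between the energy and the
universal functionals, with attained minima. -/
theorem energy_legendre_transform [FiniteDimensional ℝ V] [FiniteDimensional ℂ H] [Nontrivial H]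
    (ι : V →ₗ[ℝ] (H →ₗ[ℂ] H)) (W : H →ₗ[ℂ] H)
    (hι : ∀ v : V, (ι v).IsSymmetric) (hW : W.IsSymmetric)
    (v : V) :
    IsLeast {r : ℝ | ∃ ρ : Module.Dual ℝ V,
        (∃ ψ : H, ‖ψ‖ = 1 ∧ pureDensity ι ψ = ρ) ∧ r = ρ v + Fp ι W ρ} (energy ι W v) ∧
    IsLeast {r : ℝ | ∃ ρ : Module.Dual ℝ V,
        (∃ Γ : H →ₗ[ℂ] H, IsEnsembleState Γ ∧ traceDensity ι Γ = ρ) ∧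
        r = ρ v + Fe ι W ρ} (energy ι W v) :=
  energy_legendre_transform_general ι W v

end
end

section
/- (No-Mixing Lemma, strong form.) In an abelian functional theory, let ρ* lie in the relative interior of conv(Ω), and let Φ be a unit vector with ι*(|Φ⟩⟨Φ|) = ρ* that minimizes the constrained search at ρ*, i.e., ⟨Ψ, WΨ⟩ ≥ ⟨Φ, WΦ⟩ for every unit vector Ψ with ι*(|Ψ⟩⟨Ψ|) = ρ*. Then for every vector Γ ∈ H that is strongly orthogonal to Φ (meaning: for every weight ω ∈ Ω, the orthogonal projections of Γ and Φ onto H_ω are orthogonal), one has ⟨Γ, WΦ⟩ = 0. -/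
open Filter Topology

noncomputable section

variable {V H : Type*}
  [AddCommGroup V] [Module ℝ V]
  [NormedAddCommGroup H] [InnerProductSpace ℂ H]

/-!
The operators `ι v` are commuting and symmetric, so `H` is the orthogonal sum of the weight spaces,
and the norm and the density of `Ψ = ∑ ψ_ω` (`ψ_ω ∈ H_ω`) only depend on the masses `‖ψ_ω‖²`: the
density is `∑ ‖ψ_ω‖² • ω`. Let `γ ∈ H_α` be orthogonal to the component `Φ_α`. As `ρ*` is relatively
interior, it is also a convex combination `∑ r_ω • ω` of weights with `r_α > 0`. Along the curve
`θ ↦ ∑ (a_ω(θ) • Φ_ω + sin θ • y_ω)`, with `y_α` a multiple of `γ`, `y_ω ⊥ Φ_ω`, and amplitudes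
`a_ω` making the masses `cos² θ ‖Φ_ω‖² + sin² θ r_ω`, norm and density stay those of `Φ`. So the
derivative `2 Re ⟪y, W Φ⟫` of the energy at `θ = 0` vanishes, and varying the phase of `y_α`
isolates `⟪γ, W Φ⟫`.
-/

open scoped InnerProductSpace

theorem norm_sq_smul_add_smul_of_inner_eq_zero {φ y : H} (h : ⟪φ, y⟫_ℂ = 0) (a b : ℝ) :
    ‖a • φ + b • y‖ ^ 2 = a ^ 2 * ‖φ‖ ^ 2 + b ^ 2 * ‖y‖ ^ 2 := by
  have hab : ⟪a • φ, b • y⟫_ℂ = 0 := by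
    rw [← Complex.coe_smul, ← Complex.coe_smul, inner_smul_left, inner_smul_right, h, mul_zero,
      mul_zero]
  rw [sq, norm_add_sq_eq_norm_sq_add_norm_sq_of_inner_eq_zero _ _ hab, ← sq, ← sq, norm_smul,
    norm_smul, mul_pow, mul_pow, Real.norm_eq_abs, Real.norm_eq_abs, sq_abs, sq_abs]

theorem inner_eq_zero_of_re_inner_smul_eq {x w : H} {c : ℝ}
    (h : ∀ ζ : ℂ, ‖ζ‖ = 1 → (⟪ζ • x, w⟫_ℂ).re = c) : ⟪x, w⟫_ℂ = 0 := by
  have h₁ := h 1 (by simp)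
  have h₂ := h (-1) (by simp)
  have h₃ := h Complex.I (by simp)
  have h₄ := h (-Complex.I) (by simp)
  simp only [inner_smul_left, map_neg, map_one, Complex.conj_I, neg_neg, one_mul, neg_one_mul,
    Complex.neg_re, Complex.I_mul_re] at h₁ h₂ h₃ h₄
  apply Complex.ext <;> simp only [Complex.zero_re, Complex.zero_im] <;> linarith

theorem inner_eq_zero_of_re_inner_eq_of_norm_sq_eq {K : Submodule ℂ H} {f w : H} {m c : ℝ}
    (hm : 0 < m) (h : ∀ x ∈ K, ⟪f, x⟫_ℂ = 0 → ‖x‖ ^ 2 = m → (⟪x, w⟫_ℂ).re = c)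
    {γ : H} (hγ : γ ∈ K) (hfγ : ⟪f, γ⟫_ℂ = 0) : ⟪γ, w⟫_ℂ = 0 := by
  by_cases hγ0 : γ = 0
  · simp [hγ0]
  set t : ℝ := √m / ‖γ‖
  have ht : t ≠ 0 := div_ne_zero (Real.sqrt_ne_zero'.mpr hm) (norm_ne_zero_iff.mpr hγ0)
  have htγ : ⟪(t : ℂ) • γ, w⟫_ℂ = 0 := by
    refine inner_eq_zero_of_re_inner_smul_eq fun ζ hζ => h _ ?_ ?_ ?_
    · exact K.smul_mem _ (K.smul_mem _ hγ)
    · rw [inner_smul_right, inner_smul_right, hfγ, mul_zero, mul_zero]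
    · rw [norm_smul, norm_smul, hζ, Complex.norm_real, Real.norm_eq_abs, one_mul, mul_pow, sq_abs,
        div_pow, Real.sq_sqrt hm.le, div_mul_cancel₀ _ (by positivity)]
  simpa [inner_smul_left, ht] using htγ

theorem hasDerivAt_sqrt_cos_sq_add_sin_sq_mul (k : ℝ) :
    HasDerivAt (fun θ => √(Real.cos θ ^ 2 + Real.sin θ ^ 2 * k)) 0 0 := by
  simpa using (((Real.hasDerivAt_cos 0).pow 2).add
    (((Real.hasDerivAt_sin 0).pow 2).mul_const k)).sqrt (by simp)

theorem IsRelInterior.exists_convexCombination_pos {M : Type*} [AddCommGroup M] [Module ℝ M]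
    {s : Finset M} {ρ : M} (h : IsRelInterior (convexHull ℝ (s : Set M)) ρ) {α : M}
    (hα : α ∈ s) :
    ∃ r : M → ℝ, (∀ ω ∈ s, 0 ≤ r ω) ∧ 0 < r α ∧ ∑ ω ∈ s, r ω = 1 ∧ ∑ ω ∈ s, r ω • ω = ρ := by
  classical
  obtain ⟨τ, hτ, t, ht0, ht1, hρ⟩ := h.2 α (subset_convexHull ℝ _ hα)
  obtain ⟨q, hq0, hq1, hqτ⟩ := Finset.mem_convexHull'.mp hτ
  refine ⟨fun ω => (1 - t) * q ω + if ω = α then t else 0, fun ω hω => ?_, ?_, ?_, ?_⟩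
  · exact add_nonneg (mul_nonneg (by linarith) (hq0 ω hω)) (by split_ifs <;> linarith)
  · have := mul_nonneg (sub_nonneg.mpr ht1.le) (hq0 α hα)
    simp only [if_true]
    linarith
  · rw [Finset.sum_add_distrib, ← Finset.mul_sum, hq1, Finset.sum_ite_eq' s α, if_pos hα]
    ring
  · simp only [add_smul, mul_smul, ite_smul, zero_smul, Finset.sum_add_distrib, ← Finset.smul_sum,
      hqτ, Finset.sum_ite_eq' s α, if_pos hα, hρ]
    abel

section Variational

variable [FiniteDimensional ℂ H] {W : H →ₗ[ℂ] H}

theorem hasDerivAt_expectation (hW : W.IsSymmetric) {Ψ : ℝ → H} {X : H} {t : ℝ}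
    (hΨ : HasDerivAt Ψ X t) :
    HasDerivAt (fun t => expectation W (Ψ t)) (2 * (⟪X, W (Ψ t)⟫_ℂ).re) t := by
  have hWΨ : HasDerivAt (fun t => W (Ψ t)) (W X) t :=
    ((LinearMap.toContinuousLinearMap W).restrictScalars ℝ).hasFDerivAt.comp_hasDerivAt t hΨ
  refine (Complex.reCLM.hasFDerivAt.comp_hasDerivAt t (hΨ.inner ℂ hWΨ)).congr_deriv ?_
  rw [Complex.reCLM_apply, Complex.add_re, ← hW, ← inner_conj_symm, Complex.conj_re]
  ring

theorem re_inner_apply_eq_zero_of_isLocalMin (hW : W.IsSymmetric) {Ψ : ℝ → H} {X : H} {t : ℝ}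
    (hΨ : HasDerivAt Ψ X t) (hmin : IsLocalMin (fun t => expectation W (Ψ t)) t) :
    (⟪X, W (Ψ t)⟫_ℂ).re = 0 := by
  have := hmin.hasDerivAt_eq_zero (hasDerivAt_expectation hW hΨ)
  linarith

end Variational

section WeightSpaces

variable {ι : V →ₗ[ℝ] (H →ₗ[ℂ] H)}

theorem weightSpace_le_eigenspace (α : Module.Dual ℝ V) (v : V) :
    weightSpace ι α ≤ Module.End.eigenspace (ι v) (α v) :=
  fun _ hx => Module.End.mem_eigenspace_iff.mpr (hx v)

theorem orthogonalFamily_weightSpace (hι : ∀ v, (ι v).IsSymmetric) :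
    OrthogonalFamily ℂ (fun α => weightSpace ι α) fun α => (weightSpace ι α).subtypeₗᵢ := by
  refine OrthogonalFamily.of_pairwise fun α β hαβ => ?_
  obtain ⟨v, hv⟩ : ∃ v, α v ≠ β v := not_forall.mp (mt LinearMap.ext hαβ)
  exact ((hι v).orthogonalFamily_eigenspaces.isOrtho (by exact_mod_cast hv)).mono
    (weightSpace_le_eigenspace α v) (weightSpace_le_eigenspace β v)

theorem finite_weights [FiniteDimensional ℂ H] (hι : ∀ v, (ι v).IsSymmetric) :
    (weights ι).Finite :=
  WellFoundedGT.finite_ne_bot_of_iSupIndep (orthogonalFamily_weightSpace hι).independent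

theorem ofReal_pureDensity_apply (hι : ∀ v, (ι v).IsSymmetric) (ψ : H) (v : V) :
    (pureDensity ι ψ v : ℂ) = ⟪ψ, ι v ψ⟫_ℂ :=
  (hι v).coe_re_inner_self_apply ψ

theorem iInf_eigenspace_le_weightSpace (hι : ∀ v, (ι v).IsSymmetric) {χ : V → ℂ} {ψ : H}
    (hψ : ψ ∈ ⨅ v, Module.End.eigenspace (ι v) (χ v)) (hψ1 : ‖ψ‖ = 1) :
    ⨅ v, Module.End.eigenspace (ι v) (χ v) ≤ weightSpace ι (pureDensity ι ψ) := by
  have mem_iff : ∀ z, z ∈ ⨅ v, Module.End.eigenspace (ι v) (χ v) ↔ ∀ v, ι v z = χ v • z :=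
    fun z => by simp only [Submodule.mem_iInf, Module.End.mem_eigenspace_iff]
  intro z hz v
  have hχ : χ v = pureDensity ι ψ v := by
    rw [ofReal_pureDensity_apply hι, (mem_iff ψ).mp hψ v, inner_smul_right,
      inner_self_eq_norm_sq_to_K, hψ1]
    simp
  rw [(mem_iff z).mp hz v, hχ]

theorem sum_starProjection_weightSpace [FiniteDimensional ℂ H] (hι : ∀ v, (ι v).IsSymmetric)
    (habel : ∀ v w : V, ι v ∘ₗ ι w = ι w ∘ₗ ι v) (x : H) :
    ∑ α ∈ (finite_weights hι).toFinset, (weightSpace ι α).starProjection x = x := by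
  set s := (finite_weights hι).toFinset
  have hle : ⨆ χ : V → ℂ, ⨅ v, Module.End.eigenspace (ι v) (χ v) ≤
      ⨆ α : s, weightSpace ι α := by
    refine iSup_le fun χ => ?_
    by_cases hbot : ⨅ v, Module.End.eigenspace (ι v) (χ v) = ⊥
    · exact hbot ▸ bot_le
    obtain ⟨ψ, hψ, hψ0⟩ := Submodule.exists_mem_ne_zero_of_ne_bot hbot
    have hψ' : (‖ψ‖⁻¹ : ℂ) • ψ ∈ ⨅ v, Module.End.eigenspace (ι v) (χ v) :=
      Submodule.smul_mem _ _ hψ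
    have hψ1 : ‖(‖ψ‖⁻¹ : ℂ) • ψ‖ = 1 := by
      rw [norm_smul, norm_inv, Complex.norm_real, norm_norm,
        inv_mul_cancel₀ (norm_ne_zero_iff.mpr hψ0)]
    have hle := iInf_eigenspace_le_weightSpace hι hψ' hψ1
    have hmem : pureDensity ι ((‖ψ‖⁻¹ : ℂ) • ψ) ∈ s := by
      rw [Set.Finite.mem_toFinset]
      exact (Submodule.ne_bot_iff _).mpr ⟨_, hle hψ', by simpa using hψ0⟩
    exact hle.trans (le_iSup (fun α : s => weightSpace ι α) ⟨_, hmem⟩)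
  have htop := LinearMap.IsSymmetric.iSup_iInf_eq_top_of_commute hι
    fun v w (_ : v ≠ w) => habel v w
  rw [← Finset.sum_coe_sort s]
  exact ((orthogonalFamily_weightSpace hι).comp Subtype.val_injective).sum_projection_of_mem_iSup
    (V := fun α : s => weightSpace ι α) x (hle (htop ▸ Submodule.mem_top))

theorem norm_sq_sum_of_mem_weightSpace (hι : ∀ v, (ι v).IsSymmetric)
    {s : Finset (Module.Dual ℝ V)} {x : Module.Dual ℝ V → H} (hx : ∀ α, x α ∈ weightSpace ι α) :
    ‖∑ α ∈ s, x α‖ ^ 2 = ∑ α ∈ s, ‖x α‖ ^ 2 :=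
  (orthogonalFamily_weightSpace hι).norm_sum (fun α => ⟨x α, hx α⟩) s

theorem pureDensity_sum_of_mem_weightSpace (hι : ∀ v, (ι v).IsSymmetric)
    {s : Finset (Module.Dual ℝ V)} {x : Module.Dual ℝ V → H} (hx : ∀ α, x α ∈ weightSpace ι α) :
    pureDensity ι (∑ α ∈ s, x α) = ∑ α ∈ s, ‖x α‖ ^ 2 • α := by
  ext v
  have happly : ι v (∑ α ∈ s, x α) = ∑ α ∈ s, (α v : ℂ) • x α := by
    rw [map_sum]
    exact Finset.sum_congr rfl fun α _ => hx α v
  have hinner := (orthogonalFamily_weightSpace hι).inner_sum (fun α => ⟨x α, hx α⟩)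
    (fun α => ⟨(α v : ℂ) • x α, Submodule.smul_mem _ _ (hx α)⟩) s
  simp only [Submodule.coe_subtypeₗᵢ, Submodule.coe_subtype, Submodule.coe_inner] at hinner
  show (⟪∑ α ∈ s, x α, ι v (∑ α ∈ s, x α)⟫_ℂ).re = _
  rw [happly, hinner, Complex.re_sum, LinearMap.sum_apply]
  refine Finset.sum_congr rfl fun α _ => ?_
  rw [inner_smul_right, inner_self_eq_norm_sq_to_K, LinearMap.smul_apply, smul_eq_mul, mul_comm]
  simp [← Complex.ofReal_pow]

theorem exists_orthogonal_family_norm_sq_le {s : Finset (Module.Dual ℝ V)}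
    (hs : ∀ ω ∈ s, ω ∈ weights ι) (φ : Module.Dual ℝ V → H) {r : Module.Dual ℝ V → ℝ}
    (hr : ∀ ω ∈ s, 0 ≤ r ω) :
    ∃ Z : Module.Dual ℝ V → H, (∀ ω, Z ω ∈ weightSpace ι ω) ∧
      ∀ ω ∈ s, ⟪φ ω, Z ω⟫_ℂ = 0 ∧ ‖Z ω‖ ^ 2 ≤ r ω ∧ (φ ω = 0 → ‖Z ω‖ ^ 2 = r ω) := by
  classical
  have hunit : ∀ ω, ∃ u ∈ weightSpace ι ω, ω ∈ weights ι → ‖u‖ = 1 := by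
    intro ω
    by_cases hω : ω ∈ weights ι
    · obtain ⟨u, hu, hu0⟩ := Submodule.exists_mem_ne_zero_of_ne_bot hω
      exact ⟨(‖u‖⁻¹ : ℂ) • u, Submodule.smul_mem _ _ hu, fun _ => by simp [norm_smul, hu0]⟩
    · exact ⟨0, zero_mem _, fun h => absurd h hω⟩
  choose u hu hu1 using hunit
  refine ⟨fun ω => if φ ω = 0 then √(r ω) • u ω else 0, fun ω => ?_, fun ω hω => ?_⟩
  · dsimp only
    split_ifs
    · exact Submodule.smul_of_tower_mem _ _ (hu ω)
    · exact zero_mem _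
  dsimp only
  by_cases h0 : φ ω = 0
  · have hnorm : ‖√(r ω) • u ω‖ ^ 2 = r ω := by
      rw [norm_smul, hu1 ω (hs ω hω), mul_one, Real.norm_eq_abs, sq_abs, Real.sq_sqrt (hr ω hω)]
    simp only [h0, if_true, inner_zero_left, hnorm, le_refl, implies_true, and_self]
  · simp [h0, hr ω hω]

end WeightSpaces

section NoMixing

variable [FiniteDimensional ℂ H] {ι : V →ₗ[ℝ] (H →ₗ[ℂ] H)} {W : H →ₗ[ℂ] H}

theorem re_inner_sum_apply_sum_eq_zero (hι : ∀ v, (ι v).IsSymmetric) (hW : W.IsSymmetric)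
    {s : Finset (Module.Dual ℝ V)} {φ y : Module.Dual ℝ V → H} {r : Module.Dual ℝ V → ℝ}
    (hφ : ∀ α, φ α ∈ weightSpace ι α) (hy : ∀ α, y α ∈ weightSpace ι α)
    (hφy : ∀ α ∈ s, ⟪φ α, y α⟫_ℂ = 0) (hyr : ∀ α ∈ s, ‖y α‖ ^ 2 ≤ r α)
    (hφr : ∀ α ∈ s, φ α = 0 → ‖y α‖ ^ 2 = r α)
    (hr₁ : ∑ α ∈ s, r α = ∑ α ∈ s, ‖φ α‖ ^ 2) (hr₂ : ∑ α ∈ s, r α • α = ∑ α ∈ s, ‖φ α‖ ^ 2 • α)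
    (hmin : ∀ Ψ, ‖Ψ‖ = ‖∑ α ∈ s, φ α‖ → pureDensity ι Ψ = pureDensity ι (∑ α ∈ s, φ α) →
      expectation W (∑ α ∈ s, φ α) ≤ expectation W Ψ) :
    (⟪∑ α ∈ s, y α, W (∑ α ∈ s, φ α)⟫_ℂ).re = 0 := by
  set amp : Module.Dual ℝ V → ℝ → ℝ := fun α θ =>
    √(Real.cos θ ^ 2 + Real.sin θ ^ 2 * ((r α - ‖y α‖ ^ 2) / ‖φ α‖ ^ 2))
  set Ψ : ℝ → H := fun θ => ∑ α ∈ s, (amp α θ • φ α + Real.sin θ • y α)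
  have hmem : ∀ θ α, amp α θ • φ α + Real.sin θ • y α ∈ weightSpace ι α := fun θ α =>
    add_mem (Submodule.smul_of_tower_mem _ _ (hφ α)) (Submodule.smul_of_tower_mem _ _ (hy α))
  have hcomp : ∀ θ, ∀ α ∈ s, ‖amp α θ • φ α + Real.sin θ • y α‖ ^ 2 =
      Real.cos θ ^ 2 * ‖φ α‖ ^ 2 + Real.sin θ ^ 2 * r α := by
    intro θ α hα
    have hk : 0 ≤ (r α - ‖y α‖ ^ 2) / ‖φ α‖ ^ 2 :=
      div_nonneg (sub_nonneg.mpr (hyr α hα)) (sq_nonneg _)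
    rw [norm_sq_smul_add_smul_of_inner_eq_zero (hφy α hα), Real.sq_sqrt (by positivity)]
    rcases eq_or_ne (φ α) 0 with h0 | h0
    · rw [h0, norm_zero, hφr α hα h0]
      ring
    · field_simp
      ring
  have hnormΨ : ∀ θ, ‖Ψ θ‖ = ‖∑ α ∈ s, φ α‖ := by
    intro θ
    refine (pow_left_inj₀ (norm_nonneg _) (norm_nonneg _) two_ne_zero).mp ?_
    rw [norm_sq_sum_of_mem_weightSpace hι (hmem θ), norm_sq_sum_of_mem_weightSpace hι hφ,
      Finset.sum_congr rfl (hcomp θ), Finset.sum_add_distrib, ← Finset.mul_sum, ← Finset.mul_sum,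
      hr₁, ← add_mul, Real.cos_sq_add_sin_sq, one_mul]
  have hdensΨ : ∀ θ, pureDensity ι (Ψ θ) = pureDensity ι (∑ α ∈ s, φ α) := by
    intro θ
    rw [pureDensity_sum_of_mem_weightSpace hι (hmem θ), pureDensity_sum_of_mem_weightSpace hι hφ,
      Finset.sum_congr rfl fun α hα => congrArg (· • α) (hcomp θ α hα)]
    simp only [add_smul, mul_smul, Finset.sum_add_distrib, ← Finset.smul_sum]
    rw [hr₂, ← add_smul, Real.cos_sq_add_sin_sq, one_smul]
  have hΨ0 : Ψ 0 = ∑ α ∈ s, φ α := by simp [Ψ, amp]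
  have hderiv : HasDerivAt Ψ (∑ α ∈ s, y α) 0 := by
    have h := HasDerivAt.fun_sum fun α (_ : α ∈ s) =>
      ((hasDerivAt_sqrt_cos_sq_add_sin_sq_mul ((r α - ‖y α‖ ^ 2) / ‖φ α‖ ^ 2)).smul_const
        (φ α)).add ((Real.hasDerivAt_sin 0).smul_const (y α))
    simpa using h
  have hlocalMin : IsLocalMin (fun θ => expectation W (Ψ θ)) 0 :=
    Filter.Eventually.of_forall fun θ => by
      simpa only [hΨ0] using hmin _ (hnormΨ θ) (hdensΨ θ)
  simpa [hΨ0] using re_inner_apply_eq_zero_of_isLocalMin hW hderiv hlocalMin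

theorem inner_apply_eq_zero_of_mem_weightSpace (hι : ∀ v, (ι v).IsSymmetric)
    (habel : ∀ v w : V, ι v ∘ₗ ι w = ι w ∘ₗ ι v) (hW : W.IsSymmetric) {Φ : H} (hΦ : ‖Φ‖ = 1)
    (hρ : IsRelInterior (convexHull ℝ (weights ι)) (pureDensity ι Φ))
    (hmin : ∀ Ψ, ‖Ψ‖ = ‖Φ‖ → pureDensity ι Ψ = pureDensity ι Φ →
      expectation W Φ ≤ expectation W Ψ)
    {α : Module.Dual ℝ V} (hα : α ∈ weights ι) {γ : H} (hγ : γ ∈ weightSpace ι α)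
    (hγΦ : ⟪γ, (weightSpace ι α).starProjection Φ⟫_ℂ = 0) : ⟪γ, W Φ⟫_ℂ = 0 := by
  classical
  set s := (finite_weights hι).toFinset
  set φ : Module.Dual ℝ V → H := fun ω => (weightSpace ι ω).starProjection Φ
  have hφ : ∀ ω, φ ω ∈ weightSpace ι ω := fun ω => Submodule.starProjection_apply_mem _ Φ
  have hΦsum : ∑ ω ∈ s, φ ω = Φ := sum_starProjection_weightSpace hι habel Φ
  have hαs : α ∈ s := (Set.Finite.mem_toFinset _).mpr hα
  rw [← Set.Finite.coe_toFinset (finite_weights hι)] at hρ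
  obtain ⟨r, hr0, hrα, hr1, hrρ⟩ := hρ.exists_convexCombination_pos hαs
  have hr₁ : ∑ ω ∈ s, r ω = ∑ ω ∈ s, ‖φ ω‖ ^ 2 := by
    rw [← norm_sq_sum_of_mem_weightSpace hι hφ, hΦsum, hΦ, one_pow, hr1]
  have hr₂ : ∑ ω ∈ s, r ω • ω = ∑ ω ∈ s, ‖φ ω‖ ^ 2 • ω := by
    rw [← pureDensity_sum_of_mem_weightSpace hι hφ, hΦsum, hrρ]
  obtain ⟨Z, hZ, hZr⟩ := exists_orthogonal_family_norm_sq_le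
    (fun ω hω => (Set.Finite.mem_toFinset _).mp hω) φ hr0
  refine inner_eq_zero_of_re_inner_eq_of_norm_sq_eq hrα
    (c := -(⟪∑ ω ∈ s \ {α}, Z ω, W Φ⟫_ℂ).re) (fun γ' hγ' hφγ' hγ'r => ?_) hγ
    (inner_eq_zero_symm.mp hγΦ)
  set y := Function.update Z α γ'
  have hy : ∀ ω, y ω ∈ weightSpace ι ω := fun ω => by
    rcases eq_or_ne ω α with rfl | hne
    · simpa [y] using hγ'
    · simpa [y, Function.update_of_ne hne] using hZ ω
  have hyr : ∀ ω ∈ s, ⟪φ ω, y ω⟫_ℂ = 0 ∧ ‖y ω‖ ^ 2 ≤ r ω ∧ (φ ω = 0 → ‖y ω‖ ^ 2 = r ω) := by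
    intro ω hω
    rcases eq_or_ne ω α with rfl | hne
    · simpa [y, hγ'r] using hφγ'
    · simpa [y, Function.update_of_ne hne] using hZr ω hω
  have h := re_inner_sum_apply_sum_eq_zero hι hW hφ hy (fun ω hω => (hyr ω hω).1)
    (fun ω hω => (hyr ω hω).2.1) (fun ω hω => (hyr ω hω).2.2) hr₁ hr₂ (by rwa [hΦsum])
  rw [hΦsum, Finset.sum_update_of_mem hαs, inner_add_left, Complex.add_re] at h
  linarith

end NoMixing

theorem no_mixing_strong_general [FiniteDimensional ℂ H]
    (ι : V →ₗ[ℝ] (H →ₗ[ℂ] H)) (W : H →ₗ[ℂ] H)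
    (hι : ∀ v : V, (ι v).IsSymmetric) (hW : W.IsSymmetric)
    (habel : ∀ v w : V, ι v ∘ₗ ι w = ι w ∘ₗ ι v)
    (ρ₀ : Module.Dual ℝ V) (hρ₀ : IsRelInterior (convexHull ℝ (weights ι)) ρ₀)
    (Φ : H) (hΦ : ‖Φ‖ = 1) (hΦρ : pureDensity ι Φ = ρ₀)
    (hmin : ∀ Ψ : H, ‖Ψ‖ = 1 → pureDensity ι Ψ = ρ₀ → expectation W Φ ≤ expectation W Ψ)
    (Γ : H) (hΓ : StronglyOrthogonal ι Γ Φ) :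
    (inner ℂ Γ (W Φ) : ℂ) = 0 := by
  subst hΦρ
  have hmin' : ∀ Ψ, ‖Ψ‖ = ‖Φ‖ → pureDensity ι Ψ = pureDensity ι Φ →
      expectation W Φ ≤ expectation W Ψ := fun Ψ hΨ => hmin Ψ (hΨ.trans hΦ)
  rw [← sum_starProjection_weightSpace hι habel Γ, sum_inner]
  refine Finset.sum_eq_zero fun α hα => ?_
  have hα' : α ∈ weights ι := (Set.Finite.mem_toFinset _).mp hα
  exact inner_apply_eq_zero_of_mem_weightSpace hι habel hW hΦ hρ₀ hmin' hα'
    (Submodule.starProjection_apply_mem _ Γ) (hΓ α hα')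

/-- the No-Mixing Lemma, strong form. -/
theorem no_mixing_strong [FiniteDimensional ℝ V] [FiniteDimensional ℂ H] [Nontrivial H]
    (ι : V →ₗ[ℝ] (H →ₗ[ℂ] H)) (W : H →ₗ[ℂ] H)
    (hι : ∀ v : V, (ι v).IsSymmetric) (hW : W.IsSymmetric)
    (habel : ∀ v w : V, ι v ∘ₗ ι w = ι w ∘ₗ ι v)
    (ρ₀ : Module.Dual ℝ V) (hρ₀ : IsRelInterior (convexHull ℝ (weights ι)) ρ₀)
    (Φ : H) (hΦ : ‖Φ‖ = 1) (hΦρ : pureDensity ι Φ = ρ₀)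
    (hmin : ∀ Ψ : H, ‖Ψ‖ = 1 → pureDensity ι Ψ = ρ₀ → expectation W Φ ≤ expectation W Ψ)
    (Γ : H) (hΓ : StronglyOrthogonal ι Γ Φ) :
    (inner ℂ Γ (W Φ) : ℂ) = 0 :=
  no_mixing_strong_general ι W hι hW habel ρ₀ hρ₀ Φ hΦ hΦρ hmin Γ hΓ

end
end
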